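/- arXiv:1710.03973 — 4 statements merged into one kernel-verified Lean document; each statement's English description precedes it below -/
import Mathlib

section
/- Let f : ℝ → ℝ be continuous with primitive F, satisfying the Ambrosetti–Rabinowitz condition 0 < μ F(t) ≤ t f(t) for all t ≠ 0 with μ > 2. Then for all 0 < |t| ≤ 1, F(t) ≤ F(sign(t)) |t|^μ. -/
open MeasureTheory Filter Real
open scoped Topology

theorem stmt_2 (f : ℝ → ℝ) (hf : Continuous f)
    (F : ℝ → ℝ) (hF : ∀ t : ℝ, F t = ∫ s in (0:ℝ)..t, f s)
    (μ : ℝ) (hμ : 2 < μ)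
    (hAR : ∀ t : ℝ, t ≠ 0 → 0 < μ * F t ∧ μ * F t ≤ t * f t) :
    ∀ t : ℝ, t ≠ 0 → |t| ≤ 1 → F t ≤ F (Real.sign t) * |t| ^ μ := by
  have hFeq : F = fun u => ∫ s in (0:ℝ)..u, f s := funext hF
  have hFd : ∀ x : ℝ, HasDerivAt F (f x) x := by
    intro x
    rw [hFeq]
    exact intervalIntegral.integral_hasDerivAt_right (hf.intervalIntegrable _ _)
      (hf.stronglyMeasurableAtFilter _ _) hf.continuousAt
  have hFc : Continuous F := by
    rw [hFeq]; exact intervalIntegral.continuous_primitive (fun a b => hf.intervalIntegrable a b) 0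
  intro t ht hle
  rcases lt_or_gt_of_ne ht with hneg | hpos
  · -- t < 0
    have habs : |t| = -t := abs_of_neg hneg
    rw [Real.sign_of_neg hneg, habs]
    set G : ℝ → ℝ := fun u => F u * (-u) ^ (-μ) with hGdef
    have hderiv : ∀ x : ℝ, x < 0 →
        HasDerivAt G (f x * (-x) ^ (-μ) + F x * (-μ * (-x) ^ (-μ - 1) * (-1))) x := by
      intro x hx
      have hx0 : -x ≠ 0 := neg_ne_zero.2 (ne_of_lt hx)
      have h1 : HasDerivAt (fun u : ℝ => (-u) ^ (-μ)) (-μ * (-x) ^ (-μ - 1) * (-1)) x :=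
        (Real.hasDerivAt_rpow_const (p := -μ) (Or.inl hx0)).comp x (hasDerivAt_neg x)
      exact (hFd x).mul h1
    have hderiv_nonpos : ∀ x : ℝ, x < 0 →
        f x * (-x) ^ (-μ) + F x * (-μ * (-x) ^ (-μ - 1) * (-1)) ≤ 0 := by
      intro x hx
      have hx0 : x ≠ 0 := ne_of_lt hx
      have hxp : (0:ℝ) < -x := by linarith
      have hA : (0:ℝ) ≤ (-x) ^ (-μ - 1) := Real.rpow_nonneg hxp.le _
      have hB : μ * F x - x * f x ≤ 0 := sub_nonpos.2 (hAR x hx0).2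
      have hx' : (-x) ^ (-μ) = (-x) ^ (-μ - 1) * (-x) := by
        rw [← Real.rpow_add_one (by positivity) (-μ - 1)]; ring_nf
      rw [hx']
      nlinarith [mul_nonneg hA (neg_nonneg.2 hB)]
    have hanti : AntitoneOn G (Set.Icc (-1 : ℝ) t) := by
      apply antitoneOn_of_deriv_nonpos (convex_Icc _ _)
      · apply hFc.continuousOn.mul
        apply ContinuousOn.rpow_const (continuous_neg.continuousOn)
        intro x hx
        exact Or.inl (by simp only [ne_eq, neg_eq_zero]; exact ne_of_lt (lt_of_le_of_lt hx.2 hneg))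
      · intro x hx
        rw [interior_Icc] at hx
        exact ((hderiv x (lt_trans hx.2 hneg)).differentiableAt).differentiableWithinAt
      · intro x hx
        rw [interior_Icc] at hx
        have hx0 : x < 0 := lt_trans hx.2 hneg
        rw [(hderiv x hx0).deriv]
        exact hderiv_nonpos x hx0
    have ht1 : (-1 : ℝ) ≤ t := by linarith [habs ▸ hle]
    have hGle : G t ≤ G (-1) :=
      hanti (Set.mem_Icc.2 ⟨le_refl _, ht1⟩) (Set.mem_Icc.2 ⟨ht1, le_refl t⟩) ht1
    have hGm1 : G (-1) = F (-1) := by simp [hGdef]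
    have htp : (0:ℝ) < -t := by linarith
    have hpowpos : (0:ℝ) < (-t) ^ μ := Real.rpow_pos_of_pos htp μ
    have h2 := mul_le_mul_of_nonneg_right hGle hpowpos.le
    have hcancel : (-t) ^ (-μ) * (-t) ^ μ = 1 := by
      rw [← Real.rpow_add htp]; simp
    calc F t = F t * (-t) ^ (-μ) * (-t) ^ μ := by rw [mul_assoc, hcancel, mul_one]
      _ ≤ G (-1) * (-t) ^ μ := h2
      _ = F (-1) * (-t) ^ μ := by rw [hGm1]
  · -- t > 0
    have habs : |t| = t := abs_of_pos hpos
    rw [Real.sign_of_pos hpos, habs]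
    set G : ℝ → ℝ := fun u => F u * u ^ (-μ) with hGdef
    have hderiv : ∀ x : ℝ, 0 < x →
        HasDerivAt G (f x * x ^ (-μ) + F x * (-μ * x ^ (-μ - 1))) x := by
      intro x hx
      have h1 : HasDerivAt (fun u : ℝ => u ^ (-μ)) (-μ * x ^ (-μ - 1)) x :=
        Real.hasDerivAt_rpow_const (p := -μ) (Or.inl (ne_of_gt hx))
      exact (hFd x).mul h1
    have hderiv_nonneg : ∀ x : ℝ, 0 < x →
        0 ≤ f x * x ^ (-μ) + F x * (-μ * x ^ (-μ - 1)) := by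
      intro x hx
      have hA : (0:ℝ) ≤ x ^ (-μ - 1) := Real.rpow_nonneg hx.le _
      have hB : 0 ≤ x * f x - μ * F x := sub_nonneg.2 (hAR x (ne_of_gt hx)).2
      have hx' : x ^ (-μ) = x ^ (-μ - 1) * x := by
        rw [← Real.rpow_add_one (ne_of_gt hx) (-μ - 1)]; ring_nf
      rw [hx']
      nlinarith [mul_nonneg hA hB]
    have hmono : MonotoneOn G (Set.Icc t 1) := by
      apply monotoneOn_of_deriv_nonneg (convex_Icc _ _)
      · apply hFc.continuousOn.mul
        apply ContinuousOn.rpow_const continuousOn_id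
        intro x hx
        exact Or.inl (ne_of_gt (lt_of_lt_of_le hpos hx.1))
      · intro x hx
        rw [interior_Icc] at hx
        exact ((hderiv x (lt_trans hpos hx.1)).differentiableAt).differentiableWithinAt
      · intro x hx
        rw [interior_Icc] at hx
        have hx0 : 0 < x := lt_trans hpos hx.1
        rw [(hderiv x hx0).deriv]
        exact hderiv_nonneg x hx0
    have ht1 : t ≤ 1 := habs ▸ hle
    have hGle : G t ≤ G 1 :=
      hmono (Set.mem_Icc.2 ⟨le_refl t, ht1⟩) (Set.mem_Icc.2 ⟨ht1, le_refl _⟩) ht1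
    have hG1 : G 1 = F 1 := by simp [hGdef]
    have hpowpos : (0:ℝ) < t ^ μ := Real.rpow_pos_of_pos hpos μ
    have h2 := mul_le_mul_of_nonneg_right hGle hpowpos.le
    have hcancel : t ^ (-μ) * t ^ μ = 1 := by
      rw [← Real.rpow_add hpos]; simp
    calc F t = F t * t ^ (-μ) * t ^ μ := by rw [mul_assoc, hcancel, mul_one]
      _ ≤ G 1 * t ^ μ := h2
      _ = F 1 * t ^ μ := by rw [hG1]
end

section
/- Let (u_n) be a sequence of measurable functions on ℝᴺ, bounded in L²(ℝᴺ) and in L^q(ℝᴺ) for some q > 2, converging almost everywhere to u, and let F : ℝ → ℝ be C¹ with |F'(t)| ≤ a(|t| + |t|^{q−1}). Then ∫_{ℝᴺ} |F(u_n) − F(u_n − u) − F(u)| → 0 as n → ∞. -/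
open MeasureTheory Filter Real
open scoped Topology ENNReal

/-!
Brezis–Lieb argument. The growth bound on `F'` and the mean value theorem give, for every `ε > 0`,
`|F (s + t) - F s - F t| ≤ ε (|s| ^ p + |s| ^ q) + C_ε (|t| ^ p + |t| ^ q)`. Take `s = uₙ - v`,
`t = v`. By Fatou `v` lies in `Lᵖ ∩ L^q`, so `uₙ - v` is bounded there and the `ε`-term has
integral at most `ε B` uniformly in `n`. What exceeds it is dominated by `C_ε (|v| ^ p + |v| ^ q)`
and tends to `0` a.e., so its integral tends to `0` by dominated convergence.
-/

section Pointwise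

lemma rpow_add_mul_le {r η x y : ℝ} (hr : 0 ≤ r) (hη : 0 < η) (hx : 0 ≤ x) (hy : 0 ≤ y) :
    (x + y) ^ r * y ≤ (1 + η) ^ r * η * x ^ (r + 1) + (1 + η⁻¹) ^ r * y ^ (r + 1) := by
  have hr1 : r + 1 ≠ 0 := by linarith
  rcases le_or_gt y (η * x) with hyx | hxy
  · calc (x + y) ^ r * y ≤ ((1 + η) * x) ^ r * (η * x) :=
          mul_le_mul (rpow_le_rpow (by positivity) (by linarith) hr) hyx hy (by positivity)
      _ = (1 + η) ^ r * η * x ^ (r + 1) := by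
          rw [mul_rpow (by positivity) hx, rpow_add_one' hx hr1]; ring
      _ ≤ _ := le_add_of_nonneg_right (by positivity)
  · have hx' : x ≤ η⁻¹ * y := by
      rw [inv_mul_eq_div, le_div_iff₀ hη]; linarith
    calc (x + y) ^ r * y ≤ ((1 + η⁻¹) * y) ^ r * y :=
          mul_le_mul_of_nonneg_right (rpow_le_rpow (by positivity) (by linarith) hr) hy
      _ = (1 + η⁻¹) ^ r * y ^ (r + 1) := by
          rw [mul_rpow (by positivity) hy, rpow_add_one' hy hr1]; ring
      _ ≤ _ := le_add_of_nonneg_left (by positivity)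

lemma exists_rpow_add_mul_le {r ε : ℝ} (hr : 0 ≤ r) (hε : 0 < ε) :
    ∃ C, 0 ≤ C ∧ ∀ x y : ℝ, 0 ≤ x → 0 ≤ y →
      (x + y) ^ r * y ≤ ε * x ^ (r + 1) + C * y ^ (r + 1) := by
  have hlim : Tendsto (fun η : ℝ => (1 + η) ^ r * η) (𝓝[>] 0) (𝓝 0) := by
    have hcont : Continuous (fun η : ℝ => (1 + η) ^ r * η) :=
      ((continuous_rpow_const hr).comp (continuous_const.add continuous_id)).mul continuous_id
    simpa using (hcont.tendsto 0).mono_left nhdsWithin_le_nhds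
  obtain ⟨η, hηε, hη⟩ := ((hlim.eventually (ge_mem_nhds hε)).and self_mem_nhdsWithin).exists
  refine ⟨(1 + η⁻¹) ^ r, by positivity, fun x y hx hy => ?_⟩
  refine (rpow_add_mul_le hr hη hx hy).trans ?_
  gcongr

variable {F : ℝ → ℝ} {a p q : ℝ}

lemma abs_sub_le_of_abs_deriv_le (hF : Differentiable ℝ F) (ha : 0 ≤ a) (hp : 1 ≤ p) (hq : 1 ≤ q)
    (hF' : ∀ t, |deriv F t| ≤ a * (|t| ^ (p - 1) + |t| ^ (q - 1))) (s t : ℝ) :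
    |F (s + t) - F s| ≤ a * ((|s| + |t|) ^ (p - 1) + (|s| + |t|) ^ (q - 1)) * |t| := by
  have hbound : ∀ x ∈ Metric.closedBall (0 : ℝ) (|s| + |t|),
      ‖deriv F x‖ ≤ a * ((|s| + |t|) ^ (p - 1) + (|s| + |t|) ^ (q - 1)) := by
    intro x hx
    rw [mem_closedBall_zero_iff, Real.norm_eq_abs] at hx
    refine (hF' x).trans (mul_le_mul_of_nonneg_left (add_le_add ?_ ?_) ha) <;>
      exact rpow_le_rpow (abs_nonneg x) hx (by linarith)
  have hs : s ∈ Metric.closedBall (0 : ℝ) (|s| + |t|) := by simp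
  have hst : s + t ∈ Metric.closedBall (0 : ℝ) (|s| + |t|) := by
    simpa using abs_add_le s t
  simpa [Real.norm_eq_abs] using
    (convex_closedBall 0 _).norm_image_sub_le_of_norm_deriv_le (fun x _ => hF x) hbound hs hst

lemma abs_le_of_abs_deriv_le (hF : Differentiable ℝ F) (ha : 0 ≤ a) (hp : 1 ≤ p) (hq : 1 ≤ q)
    (hF' : ∀ t, |deriv F t| ≤ a * (|t| ^ (p - 1) + |t| ^ (q - 1))) (hF0 : F 0 = 0) (t : ℝ) :
    |F t| ≤ a * (|t| ^ p + |t| ^ q) := by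
  have h := abs_sub_le_of_abs_deriv_le hF ha hp hq hF' 0 t
  have hr : ∀ r : ℝ, 1 ≤ r → |t| ^ (r - 1) * |t| = |t| ^ r := fun r hr => by
    rw [← rpow_add_one' (abs_nonneg t) (by linarith), sub_add_cancel]
  rwa [zero_add, hF0, sub_zero, abs_zero, zero_add, mul_assoc, add_mul, hr p hp, hr q hq] at h

lemma exists_abs_add_sub_sub_le (hF : Differentiable ℝ F) (ha : 0 ≤ a) (hp : 1 ≤ p) (hq : 1 ≤ q)
    (hF' : ∀ t, |deriv F t| ≤ a * (|t| ^ (p - 1) + |t| ^ (q - 1))) (hF0 : F 0 = 0)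
    {ε : ℝ} (hε : 0 < ε) :
    ∃ C, ∀ s t, |F (s + t) - F s - F t| ≤ ε * (|s| ^ p + |s| ^ q) + C * (|t| ^ p + |t| ^ q) := by
  set ε' := ε / (a + 1)
  have hε' : 0 < ε' := by positivity
  have haε' : a * ε' ≤ ε := by
    rw [mul_div_assoc', div_le_iff₀ (by positivity)]; nlinarith
  obtain ⟨Cp, hCp, hYp⟩ := exists_rpow_add_mul_le (sub_nonneg.2 hp) hε'
  obtain ⟨Cq, hCq, hYq⟩ := exists_rpow_add_mul_le (sub_nonneg.2 hq) hε'
  refine ⟨a * (Cp + Cq + 1), fun s t => ?_⟩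
  have hS := abs_nonneg s
  have hT := abs_nonneg t
  have hYp' := hYp |s| |t| hS hT
  have hYq' := hYq |s| |t| hS hT
  rw [sub_add_cancel] at hYp' hYq'
  have hSp : 0 ≤ |s| ^ p := by positivity
  have hSq : 0 ≤ |s| ^ q := by positivity
  have hTp : 0 ≤ |t| ^ p := by positivity
  have hTq : 0 ≤ |t| ^ q := by positivity
  calc |F (s + t) - F s - F t| ≤ |F (s + t) - F s| + |F t| := abs_sub _ _
    _ ≤ a * ((|s| + |t|) ^ (p - 1) + (|s| + |t|) ^ (q - 1)) * |t| + a * (|t| ^ p + |t| ^ q) :=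
        add_le_add (abs_sub_le_of_abs_deriv_le hF ha hp hq hF' s t)
          (abs_le_of_abs_deriv_le hF ha hp hq hF' hF0 t)
    _ = a * ((|s| + |t|) ^ (p - 1) * |t|) + a * ((|s| + |t|) ^ (q - 1) * |t|)
          + a * (|t| ^ p + |t| ^ q) := by ring
    _ ≤ a * (ε' * |s| ^ p + Cp * |t| ^ p) + a * (ε' * |s| ^ q + Cq * |t| ^ q)
          + a * (|t| ^ p + |t| ^ q) := by gcongr
    _ ≤ ε * (|s| ^ p + |s| ^ q) + a * (Cp + Cq + 1) * (|t| ^ p + |t| ^ q) := by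
        nlinarith [mul_le_mul_of_nonneg_right haε' (add_nonneg hSp hSq),
          mul_nonneg (mul_nonneg ha hCp) hTq, mul_nonneg (mul_nonneg ha hCq) hTp]

end Pointwise

section Integral

variable {α : Type*} [MeasurableSpace α] {μ : Measure α}

theorem tendsto_integral_of_forall_le_mul_add_mul {f g : ℕ → α → ℝ} {h : α → ℝ} {B : ℝ}
    (hf : ∀ n, AEStronglyMeasurable (f n) μ) (hf0 : ∀ n x, 0 ≤ f n x)
    (hg : ∀ n, Integrable (g n) μ) (hg0 : ∀ n x, 0 ≤ g n x) (hgB : ∀ n, ∫ x, g n x ∂μ ≤ B)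
    (hh : Integrable h μ) (hfgh : ∀ ε > 0, ∃ C, ∀ n x, f n x ≤ ε * g n x + C * h x)
    (hlim : ∀ᵐ x ∂μ, Tendsto (fun n => f n x) atTop (𝓝 0)) :
    Tendsto (fun n => ∫ x, f n x ∂μ) atTop (𝓝 0) := by
  refine tendsto_order.2 ⟨fun b hb => Eventually.of_forall fun n =>
    hb.trans_le (integral_nonneg (hf0 n)), fun b hb => ?_⟩
  obtain ⟨ε, hε, hεB⟩ := exists_pos_mul_lt hb B
  obtain ⟨C, hC⟩ := hfgh ε hε
  set W : ℕ → α → ℝ := fun n x => max (f n x - ε * g n x) 0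
  have hW_le : ∀ n x, ‖W n x‖ ≤ |C * h x| := fun n x => by
    rw [Real.norm_eq_abs, abs_of_nonneg (le_max_right _ _)]
    exact max_le ((sub_le_iff_le_add'.2 (hC n x)).trans (le_abs_self _)) (abs_nonneg _)
  have hW_meas : ∀ n, AEStronglyMeasurable (W n) μ := fun n =>
    ((hf n).sub ((hg n).1.const_mul ε)).sup aestronglyMeasurable_const
  have hW_int : ∀ n, Integrable (W n) μ := fun n =>
    (hh.const_mul C).abs.mono' (hW_meas n) (ae_of_all _ (hW_le n))
  have hW_lim : Tendsto (fun n => ∫ x, W n x ∂μ) atTop (𝓝 0) := by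
    refine integral_zero α ℝ ▸ tendsto_integral_of_dominated_convergence _ hW_meas
      (hh.const_mul C).abs (fun n => ae_of_all _ (hW_le n)) ?_
    filter_upwards [hlim] with x hx
    refine tendsto_of_tendsto_of_tendsto_of_le_of_le tendsto_const_nhds hx
      (fun n => le_max_right _ _) (fun n => max_le ?_ (hf0 n x))
    nlinarith [hg0 n x]
  have hf_le : ∀ n, ∫ x, f n x ∂μ ≤ ε * ∫ x, g n x ∂μ + ∫ x, W n x ∂μ := fun n => by
    have hfW : ∀ x, f n x ≤ ε * g n x + W n x := fun x => by
      linarith [le_max_left (f n x - ε * g n x) 0]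
    have hgW := ((hg n).const_mul ε).add (hW_int n)
    rw [← integral_const_mul, ← integral_add ((hg n).const_mul ε) (hW_int n)]
    refine integral_mono (hgW.mono' (hf n) (ae_of_all _ fun x => ?_)) hgW hfW
    rw [Real.norm_eq_abs, abs_of_nonneg (hf0 n x)]
    exact hfW x
  filter_upwards [hW_lim.eventually (gt_mem_nhds (sub_pos.2 hεB))] with n hn
  calc ∫ x, f n x ∂μ ≤ ε * ∫ x, g n x ∂μ + ∫ x, W n x ∂μ := hf_le n
    _ ≤ B * ε + ∫ x, W n x ∂μ := by nlinarith [hgB n]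
    _ < b := by linarith

lemma integral_abs_rpow_le_of_eLpNorm_le {f : α → ℝ} {r : ℝ} {C : ℝ≥0∞} (hr : 0 < r)
    (hf : AEStronglyMeasurable f μ) (hC : eLpNorm f (ENNReal.ofReal r) μ ≤ C) (hCtop : C ≠ ∞) :
    ∫ x, |f x| ^ r ∂μ ≤ C.toReal ^ r := by
  have h := lpNorm_eq_integral_norm_rpow_toReal (by simpa using hr) ENNReal.ofReal_ne_top hf
  simp only [ENNReal.toReal_ofReal hr.le, Real.norm_eq_abs] at h
  have hI : 0 ≤ ∫ x, |f x| ^ r ∂μ := integral_nonneg fun x => by positivity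
  calc ∫ x, |f x| ^ r ∂μ = lpNorm f (ENNReal.ofReal r) μ ^ r := by
        rw [h, rpow_inv_rpow hI hr.ne']
    _ ≤ C.toReal ^ r := by
        refine rpow_le_rpow lpNorm_nonneg ?_ hr.le
        rw [← toReal_eLpNorm hf]
        exact ENNReal.toReal_mono hCtop hC

lemma MeasureTheory.MemLp.integrable_abs_rpow {f : α → ℝ} {r : ℝ} (hr : 0 < r)
    (hf : MemLp f (ENNReal.ofReal r) μ) : Integrable (fun x => |f x| ^ r) μ := by
  simpa [ENNReal.toReal_ofReal hr.le] using
    hf.integrable_norm_rpow (by simpa using hr) ENNReal.ofReal_ne_top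

lemma exists_forall_integral_abs_sub_rpow_le {u : ℕ → α → ℝ} {v : α → ℝ} {r M : ℝ} (hr : 1 ≤ r)
    (hu : ∀ n, MemLp (u n) (ENNReal.ofReal r) μ) (hv : MemLp v (ENNReal.ofReal r) μ)
    (hb : ∀ n, eLpNorm (u n) (ENNReal.ofReal r) μ ≤ ENNReal.ofReal M) :
    ∃ B, ∀ n, ∫ x, |u n x - v x| ^ r ∂μ ≤ B :=
  ⟨(ENNReal.ofReal M + eLpNorm v (ENNReal.ofReal r) μ).toReal ^ r, fun n =>
    integral_abs_rpow_le_of_eLpNorm_le (by linarith) ((hu n).1.sub hv.1)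
      ((eLpNorm_sub_le (hu n).1 hv.1 (ENNReal.one_le_ofReal.2 hr)).trans (by gcongr; exact hb n))
      (ENNReal.add_ne_top.2 ⟨ENNReal.ofReal_ne_top, hv.2.ne⟩)⟩

theorem tendsto_integral_abs_sub_sub_of_tendsto_ae {p q a M : ℝ} (hp : 1 ≤ p) (hq : 1 ≤ q)
    (ha : 0 ≤ a) {F : ℝ → ℝ} (hF : Differentiable ℝ F) (hF0 : F 0 = 0)
    (hF' : ∀ t, |deriv F t| ≤ a * (|t| ^ (p - 1) + |t| ^ (q - 1)))
    {u : ℕ → α → ℝ} {v : α → ℝ}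
    (hup : ∀ n, MemLp (u n) (ENNReal.ofReal p) μ) (huq : ∀ n, MemLp (u n) (ENNReal.ofReal q) μ)
    (hbp : ∀ n, eLpNorm (u n) (ENNReal.ofReal p) μ ≤ ENNReal.ofReal M)
    (hbq : ∀ n, eLpNorm (u n) (ENNReal.ofReal q) μ ≤ ENNReal.ofReal M)
    (hae : ∀ᵐ x ∂μ, Tendsto (fun n => u n x) atTop (𝓝 (v x))) :
    Tendsto (fun n => ∫ x, |F (u n x) - F (u n x - v x) - F (v x)| ∂μ) atTop (𝓝 0) := by
  have hum : ∀ n, AEStronglyMeasurable (u n) μ := fun n => (hup n).1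
  have hvm : AEStronglyMeasurable v μ := aestronglyMeasurable_of_tendsto_ae atTop hum hae
  have hvp : MemLp v (ENNReal.ofReal p) μ :=
    ⟨hvm, (Lp.eLpNorm_le_of_ae_tendsto (.of_forall hbp) hum hae).trans_lt ENNReal.ofReal_lt_top⟩
  have hvq : MemLp v (ENNReal.ofReal q) μ :=
    ⟨hvm, (Lp.eLpNorm_le_of_ae_tendsto (.of_forall hbq) hum hae).trans_lt ENNReal.ofReal_lt_top⟩
  obtain ⟨Bp, hBp⟩ := exists_forall_integral_abs_sub_rpow_le hp hup hvp hbp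
  obtain ⟨Bq, hBq⟩ := exists_forall_integral_abs_sub_rpow_le hq huq hvq hbq
  have hwp : ∀ n, Integrable (fun x => |u n x - v x| ^ p) μ := fun n =>
    ((hup n).sub hvp).integrable_abs_rpow (by linarith)
  have hwq : ∀ n, Integrable (fun x => |u n x - v x| ^ q) μ := fun n =>
    ((huq n).sub hvq).integrable_abs_rpow (by linarith)
  refine tendsto_integral_of_forall_le_mul_add_mul (B := Bp + Bq)
    (g := fun n x => |u n x - v x| ^ p + |u n x - v x| ^ q) (h := fun x => |v x| ^ p + |v x| ^ q)
    (fun n => ?_) (fun _ _ => abs_nonneg _) (fun n => (hwp n).add (hwq n))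
    (fun _ _ => by positivity) (fun n => ?_)
    ((hvp.integrable_abs_rpow (by linarith)).add (hvq.integrable_abs_rpow (by linarith)))
    (fun ε hε => ?_) ?_
  · have hFc := hF.continuous
    exact ((hFc.comp_aestronglyMeasurable (hum n)).sub (hFc.comp_aestronglyMeasurable
      ((hum n).sub hvm)) |>.sub (hFc.comp_aestronglyMeasurable hvm)).norm
  · rw [integral_add (hwp n) (hwq n)]
    exact add_le_add (hBp n) (hBq n)
  · obtain ⟨C, hC⟩ := exists_abs_add_sub_sub_le hF ha hp hq hF' hF0 hε
    exact ⟨C, fun n x => by simpa using hC (u n x - v x) (v x)⟩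
  · filter_upwards [hae] with x hx
    have hFc := hF.continuous
    simpa [hF0] using ((((hFc.tendsto _).comp hx).sub ((hFc.tendsto _).comp
      (hx.sub_const (v x)))).sub_const (F (v x))).abs

end Integral

theorem stmt_10_general (N : ℕ) (q a : ℝ) (hq : 2 < q) (ha : 0 < a)
    (F : ℝ → ℝ) (hF : ContDiff ℝ 1 F) (hF0 : F 0 = 0)
    (hF' : ∀ t : ℝ, |deriv F t| ≤ a * (|t| + |t| ^ (q - 1)))
    (u : ℕ → EuclideanSpace ℝ (Fin N) → ℝ) (v : EuclideanSpace ℝ (Fin N) → ℝ)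
    (hu2 : ∀ n, MeasureTheory.MemLp (u n) 2 MeasureTheory.volume)
    (huq : ∀ n, MeasureTheory.MemLp (u n) (ENNReal.ofReal q) MeasureTheory.volume)
    (M : ℝ)
    (hb : ∀ n, MeasureTheory.eLpNorm (u n) 2 MeasureTheory.volume ≤ ENNReal.ofReal M ∧
      MeasureTheory.eLpNorm (u n) (ENNReal.ofReal q) MeasureTheory.volume ≤ ENNReal.ofReal M)
    (hae : ∀ᵐ x : EuclideanSpace ℝ (Fin N), Tendsto (fun n => u n x) atTop (𝓝 (v x))) :
    Tendsto (fun n => ∫ x : EuclideanSpace ℝ (Fin N),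
      |F (u n x) - F (u n x - v x) - F (v x)|) atTop (𝓝 0) := by
  refine tendsto_integral_abs_sub_sub_of_tendsto_ae (p := 2) one_le_two (by linarith) ha.le
    (hF.differentiable one_ne_zero) hF0 (fun t => ?_) (fun n => by simpa using hu2 n) huq
    (fun n => by simpa using (hb n).1) (fun n => (hb n).2) hae
  norm_num [hF' t]

theorem stmt_10 (N : ℕ) (hN : 1 ≤ N) (q a : ℝ) (hq : 2 < q) (ha : 0 < a)
    (F : ℝ → ℝ) (hF : ContDiff ℝ 1 F) (hF0 : F 0 = 0)
    (hF' : ∀ t : ℝ, |deriv F t| ≤ a * (|t| + |t| ^ (q - 1)))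
    (u : ℕ → EuclideanSpace ℝ (Fin N) → ℝ) (v : EuclideanSpace ℝ (Fin N) → ℝ)
    (hu2 : ∀ n, MeasureTheory.MemLp (u n) 2 MeasureTheory.volume)
    (huq : ∀ n, MeasureTheory.MemLp (u n) (ENNReal.ofReal q) MeasureTheory.volume)
    (M : ℝ)
    (hb : ∀ n, MeasureTheory.eLpNorm (u n) 2 MeasureTheory.volume ≤ ENNReal.ofReal M ∧
      MeasureTheory.eLpNorm (u n) (ENNReal.ofReal q) MeasureTheory.volume ≤ ENNReal.ofReal M)
    (hae : ∀ᵐ x : EuclideanSpace ℝ (Fin N), Tendsto (fun n => u n x) atTop (𝓝 (v x))) :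
    Tendsto (fun n => ∫ x : EuclideanSpace ℝ (Fin N),
      |F (u n x) - F (u n x - v x) - F (v x)|) atTop (𝓝 0) :=
  stmt_10_general N q a hq ha F hF hF0 hF' u v hu2 huq M hb hae
end

section
/- Let N ≥ 3 and let a, b, c, d > 0 satisfy the Pohozaev relation ((N−2)/2) a + (N/2) b = (N/2) c + N d. Define φ(τ) = (τ^{N−2}/2) a + (τ^N/2) b − (N τ^{N+α}/(2(N+α))) c − τ^N d for τ ≥ 0, where α ∈ (0, N). Then φ(τ) = (τ^{N−2}/2 − (N−2)τ^N/(2N)) a + (τ^N/2 − N τ^{N+α}/(2(N+α))) c, and φ attains a strict global maximum on [0, ∞) at τ = 1. -/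
open Real

/- Eliminating `b` with the Pohozaev identity writes `φ` as `a f(τ) + c g(τ)`, where both
profiles have the shape `τ ^ p / 2 - p τ ^ q / (2 q)` with `0 < p < q`. Such a profile has a strict
global maximum at `τ = 1`: this is the weighted AM-GM (Bernoulli) inequality
`x ^ (p/q) < (p/q) x + (1 - p/q)` for `x = τ ^ q ≠ 1`. -/

lemma rpow_div_two_sub_lt_of_ne_one {p q τ : ℝ} (hp : 0 < p) (hpq : p < q) (hτ : 0 ≤ τ)
    (hτ1 : τ ≠ 1) : τ ^ p / 2 - p * τ ^ q / (2 * q) < 1 / 2 - p / (2 * q) := by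
  have hq : 0 < q := hp.trans hpq
  have hτq : τ ^ q ≠ 1 := by
    rwa [Ne, ← one_rpow q, rpow_left_inj hτ zero_le_one hq.ne']
  have bernoulli : (τ ^ q) ^ (p / q) < p / q * τ ^ q + (1 - p / q) := by
    have h := rpow_one_add_lt_one_add_mul_self (s := τ ^ q - 1) (by linarith [rpow_nonneg hτ q])
      (sub_ne_zero.mpr hτq) (div_pos hp hq) ((div_lt_one hq).mpr hpq)
    rw [add_sub_cancel] at h
    linarith
  rw [← rpow_mul hτ, mul_div_cancel₀ p hq.ne'] at bernoulli
  have h1 : p * τ ^ q / (2 * q) = p / q * τ ^ q / 2 := by ring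
  have h2 : p / (2 * q) = p / q / 2 := by ring
  rw [h1, h2]
  linarith

theorem stmt_14_general (N : ℕ) (hN : 3 ≤ N) (α : ℝ) (hα : 0 < α)
    (a b c d : ℝ) (ha : 0 < a) (hc : 0 < c)
    (hpoh : ((N:ℝ) - 2) / 2 * a + (N:ℝ) / 2 * b = (N:ℝ) / 2 * c + (N:ℝ) * d)
    (φ : ℝ → ℝ)
    (hφ : ∀ τ : ℝ, 0 ≤ τ →
      φ τ = τ ^ ((N:ℝ) - 2) / 2 * a + τ ^ (N:ℝ) / 2 * b
        - (N:ℝ) * τ ^ ((N:ℝ) + α) / (2 * ((N:ℝ) + α)) * c - τ ^ (N:ℝ) * d) :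
    (∀ τ : ℝ, 0 ≤ τ →
      φ τ = (τ ^ ((N:ℝ) - 2) / 2 - ((N:ℝ) - 2) * τ ^ (N:ℝ) / (2 * N)) * a
        + (τ ^ (N:ℝ) / 2 - (N:ℝ) * τ ^ ((N:ℝ) + α) / (2 * ((N:ℝ) + α))) * c) ∧
    (∀ τ : ℝ, 0 ≤ τ → τ ≠ 1 → φ τ < φ 1) := by
  have hN3 : (3 : ℝ) ≤ N := by exact_mod_cast hN
  have hb : b = c + 2 * d - ((N:ℝ) - 2) / N * a := by
    field_simp
    linarith
  have hform : ∀ τ : ℝ, 0 ≤ τ →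
      φ τ = (τ ^ ((N:ℝ) - 2) / 2 - ((N:ℝ) - 2) * τ ^ (N:ℝ) / (2 * N)) * a
        + (τ ^ (N:ℝ) / 2 - (N:ℝ) * τ ^ ((N:ℝ) + α) / (2 * ((N:ℝ) + α))) * c := by
    intro τ hτ
    rw [hφ τ hτ, hb]
    field_simp
    ring
  refine ⟨hform, fun τ hτ hτ1 => ?_⟩
  have hf := rpow_div_two_sub_lt_of_ne_one (p := (N:ℝ) - 2) (q := N) (by linarith) (by linarith)
    hτ hτ1
  have hg := rpow_div_two_sub_lt_of_ne_one (p := N) (q := (N:ℝ) + α) (by linarith)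
    (by linarith) hτ hτ1
  rw [hform τ hτ, hform 1 zero_le_one]
  simp only [one_rpow, mul_one]
  exact add_lt_add (mul_lt_mul_of_pos_right hf ha) (mul_lt_mul_of_pos_right hg hc)

theorem stmt_14 (N : ℕ) (hN : 3 ≤ N) (α : ℝ) (hα : 0 < α) (hαN : α < N)
    (a b c d : ℝ) (ha : 0 < a) (hb : 0 < b) (hc : 0 < c) (hd : 0 < d)
    (hpoh : ((N:ℝ) - 2) / 2 * a + (N:ℝ) / 2 * b = (N:ℝ) / 2 * c + (N:ℝ) * d)
    (φ : ℝ → ℝ)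
    (hφ : ∀ τ : ℝ, 0 ≤ τ →
      φ τ = τ ^ ((N:ℝ) - 2) / 2 * a + τ ^ (N:ℝ) / 2 * b
        - (N:ℝ) * τ ^ ((N:ℝ) + α) / (2 * ((N:ℝ) + α)) * c - τ ^ (N:ℝ) * d) :
    (∀ τ : ℝ, 0 ≤ τ →
      φ τ = (τ ^ ((N:ℝ) - 2) / 2 - ((N:ℝ) - 2) * τ ^ (N:ℝ) / (2 * N)) * a
        + (τ ^ (N:ℝ) / 2 - (N:ℝ) * τ ^ ((N:ℝ) + α) / (2 * ((N:ℝ) + α))) * c) ∧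
    (∀ τ : ℝ, 0 ≤ τ → τ ≠ 1 → φ τ < φ 1) :=
  stmt_14_general N hN α hα a b c d ha hc hpoh φ hφ
end

section
/- Let q > 2 and K ∈ L^∞(ℝᴺ) with K(x) → K_∞ as |x| → ∞. If (u_n) is bounded in L^q(ℝᴺ), (y_n) ⊂ ℝᴺ with |y_n| → ∞, and w ∈ L^q(ℝᴺ), then ∫_{ℝᴺ} (K(x) − K_∞) |u_n(x)|^{q−2} u_n(x) w(x − y_n) dx → 0 as n → ∞. -/
/-!
Write the integrand as `f n * g n` with `f n = |u n|^(q-2) u n` and `g n = (K - K∞) w(· - y n)`.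
Since `‖f n‖ = ‖u n‖^(q-1)`, the `f n` are bounded in `L^(q/(q-1))`. Translating by `y n`,
`g n` becomes `(K(· + y n) - K∞) w`, which tends to `0` pointwise (as `|x + y n| → ∞`) and is
dominated by `C |w|`; so `g n → 0` in `L^q`, and Hölder's inequality concludes.
-/

open MeasureTheory Filter Real
open scoped Topology ENNReal

section

variable {α : Type*} [MeasurableSpace α] {μ : Measure α}

theorem tendsto_eLpNorm_zero_of_dominated {E ι : Type*} [NormedAddCommGroup E]
    {l : Filter ι} [l.IsCountablyGenerated] {p : ℝ≥0∞} (hp : p ≠ ∞)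
    {F : ι → α → E} {bound : α → ℝ} (hF : ∀ᶠ i in l, AEStronglyMeasurable (F i) μ)
    (hbound : MemLp bound p μ) (h_le : ∀ᶠ i in l, ∀ᵐ x ∂μ, ‖F i x‖ ≤ bound x)
    (h_lim : ∀ᵐ x ∂μ, Tendsto (fun i => F i x) l (𝓝 0)) :
    Tendsto (fun i => eLpNorm (F i) p μ) l (𝓝 0) := by
  rcases eq_or_ne p 0 with rfl | hp0
  · simpa using tendsto_const_nhds
  have hp_pos : 0 < p.toReal := ENNReal.toReal_pos hp0 hp
  have h_rpow {r : ℝ} (hr : 0 < r) : Tendsto (fun t : ℝ≥0∞ => t ^ r) (𝓝 0) (𝓝 0) :=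
    (ENNReal.continuous_rpow_const.tendsto 0).trans_eq (by rw [ENNReal.zero_rpow_of_pos hr])
  have h_int : Tendsto (fun i => ∫⁻ x, ‖F i x‖ₑ ^ p.toReal ∂μ) l (𝓝 0) := by
    simpa using tendsto_lintegral_filter_of_dominated_convergence'
      (F := fun i x => ‖F i x‖ₑ ^ p.toReal) (f := fun _ => 0)
      (fun x => ‖bound x‖ₑ ^ p.toReal) (hF.mono fun i hi => hi.enorm.pow_const _)
      (h_le.mono fun i hi => hi.mono fun x hx => by
        gcongr
        exact enorm_le_iff_norm_le.2 (hx.trans (le_abs_self _)))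
      (lintegral_rpow_enorm_lt_top_of_eLpNorm_lt_top hp0 hp hbound.2).ne
      (h_lim.mono fun x hx => (h_rpow hp_pos).comp (by simpa using hx.enorm))
  simp_rw [eLpNorm_eq_lintegral_rpow_enorm_toReal hp0 hp]
  exact (h_rpow (by positivity)).comp h_int

theorem tendsto_integral_mul_of_eLpNorm_le_of_tendsto_zero {ι : Type*} {l : Filter ι}
    {p q : ℝ≥0∞} [p.HolderConjugate q] {f g : ι → α → ℝ} {C : ℝ≥0∞} (hC : C ≠ ∞)
    (hf : ∀ i, AEStronglyMeasurable (f i) μ) (hg : ∀ i, AEStronglyMeasurable (g i) μ)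
    (hfC : ∀ i, eLpNorm (f i) p μ ≤ C) (hg0 : Tendsto (fun i => eLpNorm (g i) q μ) l (𝓝 0)) :
    Tendsto (fun i => ∫ x, f i x * g i x ∂μ) l (𝓝 0) := by
  have hbound (i : ι) : ‖∫ x, f i x * g i x ∂μ‖ₑ ≤ C * eLpNorm (g i) q μ :=
    calc ‖∫ x, f i x * g i x ∂μ‖ₑ ≤ eLpNorm (f i • g i) 1 μ := by
          rw [eLpNorm_one_eq_lintegral_enorm]; exact enorm_integral_le_lintegral_enorm _
      _ ≤ eLpNorm (f i) p μ * eLpNorm (g i) q μ := eLpNorm_smul_le_mul_eLpNorm (hg i) (hf i)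
      _ ≤ C * eLpNorm (g i) q μ := by gcongr; exact hfC i
  have hCg := ENNReal.Tendsto.const_mul hg0 (Or.inr hC)
  rw [mul_zero] at hCg
  exact tendsto_zero_iff_enorm_tendsto_zero.2 <|
    tendsto_of_tendsto_of_tendsto_of_le_of_le tendsto_const_nhds hCg (fun _ => zero_le) hbound

theorem norm_abs_rpow_sub_two_mul_self {q : ℝ} (hq : 1 < q) (a : ℝ) :
    ‖|a| ^ (q - 2) * a‖ = ‖a‖ ^ (q - 1) := by
  rcases eq_or_ne a 0 with rfl | ha
  · simp [Real.zero_rpow (by linarith : q - 1 ≠ 0)]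
  simp only [norm_mul, Real.norm_eq_abs, abs_of_nonneg (by positivity : 0 ≤ |a| ^ (q - 2)),
    ← Real.rpow_add_one (abs_ne_zero.2 ha)]
  ring_nf

theorem eLpNorm_abs_rpow_sub_two_mul_self {q : ℝ} (hq : 1 < q) (f : α → ℝ) :
    eLpNorm (fun x => |f x| ^ (q - 2) * f x) (ENNReal.ofReal (q / (q - 1))) μ =
      eLpNorm f (ENNReal.ofReal q) μ ^ (q - 1) := by
  have hq1 : 0 < q - 1 := by linarith
  rw [eLpNorm_congr_norm_ae (g := fun x => ‖f x‖ ^ (q - 1)) (Eventually.of_forall fun x => by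
      rw [norm_abs_rpow_sub_two_mul_self hq]; exact (Real.norm_of_nonneg (by positivity)).symm),
    eLpNorm_norm_rpow f hq1, ← ENNReal.ofReal_mul (by positivity), div_mul_cancel₀ _ hq1.ne']

theorem holderConjugate_ofReal_div_sub_one {q : ℝ} (hq : 1 < q) :
    (ENNReal.ofReal (q / (q - 1))).HolderConjugate (ENNReal.ofReal q) :=
  ((Real.holderConjugate_iff_eq_conjExponent hq).2 rfl).symm.ennrealOfReal

end

section Translation

variable {G : Type*} [AddGroup G] [TopologicalSpace G] [IsTopologicalAddGroup G]
  [MeasurableSpace G] [MeasurableAdd G] {μ : Measure G} [μ.IsAddRightInvariant]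

theorem tendsto_eLpNorm_mul_comp_sub_of_tendsto_cocompact {ι : Type*} {l : Filter ι}
    [l.IsCountablyGenerated] {p : ℝ≥0∞} (hp : p ≠ ∞) {φ : G → ℝ} (hφm : Measurable φ) {C : ℝ}
    (hφC : ∀ x, |φ x| ≤ C) (hφ : Tendsto φ (cocompact G) (𝓝 0)) {w : G → ℝ}
    (hw : MemLp w p μ) {y : ι → G} (hy : Tendsto y l (cocompact G)) :
    Tendsto (fun i => eLpNorm (fun x => φ x * w (x - y i)) p μ) l (𝓝 0) := by
  have hmeas (z : G) : AEStronglyMeasurable (fun x => φ (x + z) * w x) μ :=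
    (hφm.comp (measurable_add_const z)).aestronglyMeasurable.mul hw.1
  have hshift (z : G) : eLpNorm (fun x => φ x * w (x - z)) p μ =
      eLpNorm (fun x => φ (x + z) * w x) p μ := by
    simpa [Function.comp_def] using
      eLpNorm_comp_measurePreserving (p := p) (hmeas z) (measurePreserving_sub_right μ z)
  simp_rw [hshift]
  refine tendsto_eLpNorm_zero_of_dominated hp (.of_forall fun i => hmeas (y i))
    (hw.norm.const_mul C) (.of_forall fun i => .of_forall fun x => ?_) (.of_forall fun x => ?_)
  · rw [norm_mul, Real.norm_eq_abs (φ _)]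
    gcongr
    exact hφC _
  · have h_add : Tendsto (fun i => x + y i) l (cocompact G) :=
      (tendsto_map.mono_right (Homeomorph.addLeft x).map_cocompact.le).comp hy
    simpa using (hφ.comp h_add).mul_const (w x)

end Translation

theorem stmt_16_general (N : ℕ) (q : ℝ) (hq : 2 < q)
    (K : EuclideanSpace ℝ (Fin N) → ℝ) (hKm : Measurable K)
    (MK : ℝ) (hKb : ∀ x, |K x| ≤ MK)
    (Kinf : ℝ) (hKlim : Tendsto K (Filter.cocompact (EuclideanSpace ℝ (Fin N))) (𝓝 Kinf))
    (u : ℕ → EuclideanSpace ℝ (Fin N) → ℝ)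
    (hu : ∀ n, MeasureTheory.MemLp (u n) (ENNReal.ofReal q) MeasureTheory.volume)
    (M : ℝ) (hub : ∀ n,
      MeasureTheory.eLpNorm (u n) (ENNReal.ofReal q) MeasureTheory.volume ≤ ENNReal.ofReal M)
    (y : ℕ → EuclideanSpace ℝ (Fin N)) (hy : Tendsto (fun n => ‖y n‖) atTop atTop)
    (w : EuclideanSpace ℝ (Fin N) → ℝ)
    (hw : MeasureTheory.MemLp w (ENNReal.ofReal q) MeasureTheory.volume) :
    Tendsto (fun n => ∫ x : EuclideanSpace ℝ (Fin N),
      (K x - Kinf) * |u n x| ^ (q - 2) * u n x * w (x - y n)) atTop (𝓝 0) := by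
  have hq1 : 1 < q := by linarith
  have := holderConjugate_ofReal_div_sub_one hq1
  have hy' : Tendsto y atTop (cocompact _) :=
    (tendsto_norm_atTop_iff_cobounded.1 hy).mono_right Metric.cobounded_le_cocompact
  have hK0 : Tendsto (fun x => K x - Kinf) (cocompact _) (𝓝 0) := by
    simpa using hKlim.sub_const Kinf
  have hKC (x : EuclideanSpace ℝ (Fin N)) : |K x - Kinf| ≤ MK + |Kinf| :=
    (abs_sub _ _).trans (by gcongr; exact hKb x)
  have hub' (n : ℕ) : eLpNorm (fun x => |u n x| ^ (q - 2) * u n x)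
      (ENNReal.ofReal (q / (q - 1))) volume ≤ ENNReal.ofReal M ^ (q - 1) := by
    rw [eLpNorm_abs_rpow_sub_two_mul_self hq1]
    gcongr
    exact hub n
  refine (tendsto_integral_mul_of_eLpNorm_le_of_tendsto_zero
    (f := fun n x => |u n x| ^ (q - 2) * u n x) (g := fun n x => (K x - Kinf) * w (x - y n))
    (ENNReal.rpow_ne_top_of_nonneg (by linarith) ENNReal.ofReal_ne_top)
    (fun n => (((hu n).1.aemeasurable.abs.pow_const _).mul
      (hu n).1.aemeasurable).aestronglyMeasurable)
    (fun n => (hKm.sub_const Kinf).aestronglyMeasurable.mul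
      (hw.1.comp_measurePreserving (measurePreserving_sub_right volume (y n)))) hub'
    (tendsto_eLpNorm_mul_comp_sub_of_tendsto_cocompact ENNReal.ofReal_ne_top
      (hKm.sub_const Kinf) hKC hK0 hw hy')).congr fun n => ?_
  congr 1
  ext x
  ring

theorem stmt_16 (N : ℕ) (hN : 1 ≤ N) (q : ℝ) (hq : 2 < q)
    (K : EuclideanSpace ℝ (Fin N) → ℝ) (hKm : Measurable K)
    (MK : ℝ) (hKb : ∀ x, |K x| ≤ MK)
    (Kinf : ℝ) (hKlim : Tendsto K (Filter.cocompact (EuclideanSpace ℝ (Fin N))) (𝓝 Kinf))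
    (u : ℕ → EuclideanSpace ℝ (Fin N) → ℝ)
    (hu : ∀ n, MeasureTheory.MemLp (u n) (ENNReal.ofReal q) MeasureTheory.volume)
    (M : ℝ) (hub : ∀ n,
      MeasureTheory.eLpNorm (u n) (ENNReal.ofReal q) MeasureTheory.volume ≤ ENNReal.ofReal M)
    (y : ℕ → EuclideanSpace ℝ (Fin N)) (hy : Tendsto (fun n => ‖y n‖) atTop atTop)
    (w : EuclideanSpace ℝ (Fin N) → ℝ)
    (hw : MeasureTheory.MemLp w (ENNReal.ofReal q) MeasureTheory.volume) :
    Tendsto (fun n => ∫ x : EuclideanSpace ℝ (Fin N),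
      (K x - Kinf) * |u n x| ^ (q - 2) * u n x * w (x - y n)) atTop (𝓝 0) :=
  stmt_16_general N q hq K hKm MK hKb Kinf hKlim u hu M hub y hy w hw
end
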